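/- arXiv:1110.5030 — 3 statements merged into one kernel-verified Lean document; each statement's English description precedes it below -/
import Mathlib

section
/- Let p ≥ 1 and let C be a real symmetric 2p×2p matrix. If there exists a hermitian structure J on ℝ^{2p} (i.e. a real 2p×2p matrix J with JᵀJ = I and J² = −I) such that JC = CJ, then there exist real numbers ν₁ ≥ ν₂ ≥ … ≥ ν_p such that the characteristic polynomial of C equals ∏_{i=1}^{p} (X − ν_i)²; equivalently, the ordered spectrum of C (its 2p real eigenvalues with multiplicity, in decreasing order) is the doubled list (ν₁, ν₁, ν₂, ν₂, …, ν_p, ν_p). -/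
/-!
An endomorphism `J` with `J² = -1` of a real vector space `V` forces `dim V` to be even, since
`(det J)² = det (-1) = (-1) ^ dim V`. If `J` commutes with `C`, it preserves every generalized
eigenspace of `C`, whose dimension is the multiplicity of the eigenvalue as a root of the
characteristic polynomial; so all these multiplicities are even. A symmetric `C` has a split
characteristic polynomial, so its roots form a multiset with even counts: twice a multiset of
size `p`, which we list in decreasing order.
-/

open Matrix Polynomial

theorem Multiset.exists_antitone_eq_map_univ {α : Type*} [LinearOrder α] {s : Multiset α}
    {n : ℕ} (h : card s = n) : ∃ ν : Fin n → α, Antitone ν ∧ s = Finset.univ.val.map ν := by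
  subst h
  set l := s.sort (· ≥ ·)
  have hl : l.length = card s := Multiset.length_sort _
  refine ⟨fun i => l.get (i.cast hl.symm), fun i j hij => ?_, ?_⟩
  · exact (s.pairwise_sort (· ≥ ·)).rel_get_of_le ((Fin.cast_le_cast _).2 hij)
  · rw [Fin.univ_val_map, ← List.ofFn_congr hl l.get, List.ofFn_get, Multiset.sort_eq]

namespace Module.End

variable {K V : Type*} [Field K] [LinearOrder K] [IsStrictOrderedRing K]
  [AddCommGroup V] [Module K V] [FiniteDimensional K V]

theorem even_finrank_of_mul_self_eq_neg_one {J : End K V} (hJ : J * J = -1) :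
    Even (Module.finrank K V) := by
  by_contra hodd
  have hdet : LinearMap.det J * LinearMap.det J = -1 := by
    rw [← map_mul, hJ, ← neg_one_smul K 1, LinearMap.det_smul, map_one, mul_one,
      (Nat.not_even_iff_odd.1 hodd).neg_one_pow]
  linarith [mul_self_nonneg (LinearMap.det J)]

theorem even_rootMultiplicity_charpoly {φ J : End K V} (hJ : J * J = -1)
    (hφJ : Commute φ J) (μ : K) : Even (φ.charpoly.rootMultiplicity μ) := by
  rw [← LinearMap.finrank_maxGenEigenspace_eq]
  refine even_finrank_of_mul_self_eq_neg_one
    (J := J.restrict (φ.mapsTo_maxGenEigenspace_of_comm hφJ μ)) ?_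
  ext x
  show J (J x) = -(x : V)
  rw [← Module.End.mul_apply, hJ]
  rfl

end Module.End

theorem Matrix.even_rootMultiplicity_charpoly {K n : Type*} [Field K] [LinearOrder K]
    [IsStrictOrderedRing K] [Fintype n] [DecidableEq n] {A J : Matrix n n K}
    (hJ : J * J = -1) (hAJ : Commute A J) (μ : K) :
    Even (A.charpoly.rootMultiplicity μ) := by
  rw [← charpoly_toLin']
  exact Module.End.even_rootMultiplicity_charpoly (J := toLinAlgEquiv' J)
    (by rw [← map_mul, hJ, map_neg, map_one]) (hAJ.map toLinAlgEquiv') μ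

theorem Polynomial.exists_antitone_eq_prod_sq {R : Type*} [CommRing R] [IsDomain R]
    [LinearOrder R] {P : R[X]} {p : ℕ} (hmonic : P.Monic) (hsplit : P.Splits)
    (hdeg : P.natDegree = 2 * p) (heven : ∀ a, Even (P.rootMultiplicity a)) :
    ∃ ν : Fin p → R, Antitone ν ∧ P = ∏ i, (X - C (ν i)) ^ 2 := by
  obtain ⟨t, ht⟩ := P.roots.exists_smul_of_dvd_count fun a _ => by
    simpa only [count_roots] using (heven a).two_dvd
  have hcard : Multiset.card t = p := by
    have := splits_iff_card_roots.1 hsplit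
    rw [hdeg, ht, Multiset.card_nsmul] at this
    omega
  obtain ⟨ν, hν, rfl⟩ := Multiset.exists_antitone_eq_map_univ hcard
  refine ⟨ν, hν, ?_⟩
  rw [hsplit.eq_prod_roots_of_monic hmonic, ht, Multiset.map_nsmul, Multiset.prod_nsmul,
    Multiset.map_map, Finset.prod_pow]
  rfl

theorem hermitian_commuting_structure_implies_doubled_spectrum_general
    (p : ℕ)
    (C : Matrix (Fin (2 * p)) (Fin (2 * p)) ℝ) (hC : C.IsSymm)
    (hJ : ∃ J : Matrix (Fin (2 * p)) (Fin (2 * p)) ℝ,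
      Jᵀ * J = 1 ∧ J * J = -1 ∧ J * C = C * J) :
    ∃ ν : Fin p → ℝ, Antitone ν ∧
      C.charpoly = ∏ i : Fin p, (Polynomial.X - Polynomial.C (ν i)) ^ 2 := by
  obtain ⟨J, -, hJJ, hJC⟩ := hJ
  exact exists_antitone_eq_prod_sq (charpoly_monic C)
    (isHermitian_iff_isSymm.2 hC).splits_charpoly (by simp)
    (even_rootMultiplicity_charpoly hJJ hJC.symm)

/-- If a real symmetric `2p × 2p` matrix `C` commutes with some
hermitian structure `J` (a real matrix with `Jᵀ * J = 1` and `J * J = -1`), then its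
characteristic polynomial is of the form `∏ (X - νᵢ)²` for some decreasing reals
`ν₁ ≥ ⋯ ≥ ν_p`, i.e. its ordered spectrum is the doubled list `(ν₁, ν₁, …, ν_p, ν_p)`. -/
theorem hermitian_commuting_structure_implies_doubled_spectrum
    (p : ℕ) (hp : 1 ≤ p)
    (C : Matrix (Fin (2 * p)) (Fin (2 * p)) ℝ) (hC : C.IsSymm)
    (hJ : ∃ J : Matrix (Fin (2 * p)) (Fin (2 * p)) ℝ,
      Jᵀ * J = 1 ∧ J * J = -1 ∧ J * C = C * J) :
    ∃ ν : Fin p → ℝ, Antitone ν ∧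
      C.charpoly = ∏ i : Fin p, (Polynomial.X - Polynomial.C (ν i)) ^ 2 :=
  hermitian_commuting_structure_implies_doubled_spectrum_general p C hC hJ
end

section
/- Let p ≥ 1 and let C be a real symmetric 2p×2p matrix whose characteristic polynomial equals ∏_{i=1}^{p} (X − ν_i)² for some real numbers ν₁ ≥ ν₂ ≥ … ≥ ν_p (i.e. every eigenvalue of C has even multiplicity, the ordered spectrum being the doubled list (ν₁, ν₁, …, ν_p, ν_p)). Then there exists a hermitian structure J on ℝ^{2p} (a real 2p×2p matrix with JᵀJ = I and J² = −I) such that JC = CJ. -/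
/-!
Diagonalize `C = U D Uᵀ` orthogonally. Comparing roots of the characteristic polynomial, the
eigenvalues of `C` can be indexed by `Fin p × Fin 2` so that the diagonal `D` is constant on each
pair `{(k, 0), (k, 1)}`. The block-diagonal matrix with a `2 × 2` rotation `!![0, 1; -1, 0]` on
each pair is then a hermitian structure commuting with `D`, and conjugating it by `U` gives `J`.
-/

open Matrix Kronecker

theorem Equiv.exists_comp_eq_of_map_univ_eq {α β γ : Type*} [Fintype α] [Fintype β]
    [DecidableEq γ] {f : α → γ} {g : β → γ}
    (h : Finset.univ.val.map f = Finset.univ.val.map g) : ∃ e : α ≃ β, g ∘ e = f := by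
  have hfiber (c : γ) : Fintype.card {a // f a = c} = Fintype.card {b // g b = c} := by
    simpa [Fintype.card_subtype, Finset.card_def, Finset.filter_val, Multiset.count_map,
      eq_comm] using congrArg (Multiset.count c) h
  exact ⟨Equiv.ofFiberEquiv fun c => Fintype.equivOfCardEq (hfiber c),
    funext (Equiv.ofFiberEquiv_map _)⟩

section Eigenvalues

open Polynomial

theorem Polynomial.roots_prod_univ_X_sub_C {R ι : Type*} [CommRing R] [IsDomain R] [Fintype ι]
    (f : ι → R) : (∏ i, (X - C (f i))).roots = Finset.univ.val.map f := by
  have h := roots_multiset_prod_X_sub_C (Finset.univ.val.map f)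
  rwa [Multiset.map_map] at h

theorem Matrix.IsHermitian.exists_equiv_comp_eq_eigenvalues {𝕜 n κ : Type*} [RCLike 𝕜]
    [Fintype n] [DecidableEq n] [Fintype κ] {A : Matrix n n 𝕜} (hA : A.IsHermitian)
    (f : κ → ℝ) (h : A.charpoly = ∏ k, (X - C (f k : 𝕜))) :
    ∃ e : n ≃ κ, f ∘ e = hA.eigenvalues := by
  classical
  refine Equiv.exists_comp_eq_of_map_univ_eq
    (Multiset.map_injective (RCLike.ofReal_injective (K := 𝕜)) ?_)
  rw [Multiset.map_map, Multiset.map_map, ← hA.roots_charpoly_eq_eigenvalues, h,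
    roots_prod_univ_X_sub_C]
  rfl

end Eigenvalues

/-- For real matrices `star J = Jᵀ`, so this is the condition `JᵀJ = 1`, `J² = -1`. -/
structure IsHermitianStructure {R : Type*} [Ring R] [Star R] (J : R) : Prop where
  star_mul_self : star J * J = 1
  mul_self : J * J = -1

theorem IsHermitianStructure.map {R S F : Type*} [Ring R] [Star R] [Ring S] [Star S]
    [FunLike F R S] [RingHomClass F R S] [StarHomClass F R S] {J : R}
    (hJ : IsHermitianStructure J) (φ : F) : IsHermitianStructure (φ J) where
  star_mul_self := by rw [← map_star, ← map_mul, hJ.star_mul_self, map_one]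
  mul_self := by rw [← map_mul, hJ.mul_self, map_neg, map_one]

section MatrixHermitianStructure

variable {R m n : Type*} [Fintype m] [DecidableEq m] [Fintype n] [DecidableEq n]

theorem IsHermitianStructure.reindex [Ring R] [Star R] {J : Matrix m m R}
    (hJ : IsHermitianStructure J) (e : m ≃ n) : IsHermitianStructure (reindex e e J) where
  star_mul_self := by
    rw [star_eq_conjTranspose, conjTranspose_reindex, ← star_eq_conjTranspose, reindex_apply,
      reindex_apply, submatrix_mul_equiv, hJ.star_mul_self, submatrix_one_equiv]
  mul_self := by
    rw [reindex_apply, submatrix_mul_equiv, hJ.mul_self]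
    exact congrArg Neg.neg (submatrix_one_equiv e.symm)

theorem IsHermitianStructure.one_kronecker [CommRing R] [StarRing R] {J : Matrix n n R}
    (hJ : IsHermitianStructure J) : IsHermitianStructure ((1 : Matrix m m R) ⊗ₖ J) where
  star_mul_self := by
    rw [star_eq_conjTranspose, conjTranspose_kronecker, conjTranspose_one, ← mul_kronecker_mul,
      ← star_eq_conjTranspose, hJ.star_mul_self, one_mul, one_kronecker_one]
  mul_self := by
    rw [← mul_kronecker_mul, hJ.mul_self, one_mul, ← neg_one_smul R 1, kronecker_smul,
      one_kronecker_one, neg_one_smul]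

theorem Matrix.isHermitianStructure_rotation [CommRing R] [StarRing R] [TrivialStar R] :
    IsHermitianStructure !![(0 : R), 1; -1, 0] where
  star_mul_self := by
    rw [star_eq_conjTranspose, conjTranspose_eq_transpose_of_trivial]
    ext i j; fin_cases i <;> fin_cases j <;> simp [mul_apply]
  mul_self := by ext i j; fin_cases i <;> fin_cases j <;> simp [mul_apply]

theorem Matrix.commute_one_kronecker_kronecker_one [CommSemiring R] (A : Matrix m m R)
    (B : Matrix n n R) : Commute ((1 : Matrix m m R) ⊗ₖ B) (A ⊗ₖ (1 : Matrix n n R)) := by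
  simp only [Commute, SemiconjBy, ← mul_kronecker_mul, one_mul, mul_one]

theorem Matrix.exists_isHermitianStructure_commute_diagonal_comp [CommRing R] [StarRing R]
    [TrivialStar R] (ν : m → R) (e : n ≃ m × Fin 2) :
    ∃ J : Matrix n n R,
      IsHermitianStructure J ∧ Commute J (diagonal ((fun x => ν x.1) ∘ e)) := by
  refine ⟨reindex e.symm e.symm (1 ⊗ₖ !![0, 1; -1, 0]),
    isHermitianStructure_rotation.one_kronecker.reindex _, ?_⟩
  have hdiag : diagonal ((fun x => ν x.1) ∘ e) = reindex e.symm e.symm (diagonal ν ⊗ₖ 1) := by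
    rw [← diagonal_one, diagonal_kronecker_diagonal, reindex_apply, Equiv.symm_symm,
      submatrix_diagonal_equiv]
    simp only [mul_one]
  rw [hdiag, Commute, SemiconjBy, reindex_apply, reindex_apply, submatrix_mul_equiv,
    submatrix_mul_equiv, (commute_one_kronecker_kronecker_one _ _).eq]

end MatrixHermitianStructure

theorem doubled_spectrum_implies_hermitian_commuting_structure_general
    (p : ℕ)
    (C : Matrix (Fin (2 * p)) (Fin (2 * p)) ℝ) (hC : C.IsSymm)
    (ν : Fin p → ℝ)
    (hspec : C.charpoly = ∏ i : Fin p, (Polynomial.X - Polynomial.C (ν i)) ^ 2) :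
    ∃ J : Matrix (Fin (2 * p)) (Fin (2 * p)) ℝ,
      Jᵀ * J = 1 ∧ J * J = -1 ∧ J * C = C * J := by
  have hCh : C.IsHermitian := by rwa [IsHermitian, conjTranspose_eq_transpose_of_trivial]
  obtain ⟨e, he⟩ := hCh.exists_equiv_comp_eq_eigenvalues (fun x : Fin p × Fin 2 => ν x.1) (by
    rw [hspec, Fintype.prod_prod_type]
    simp only [Fin.prod_const, RCLike.ofReal_real_eq_id, id])
  obtain ⟨J₀, hJ₀, hJ₀D⟩ := exists_isHermitianStructure_commute_diagonal_comp ν e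
  set φ := Unitary.conjStarAlgAut ℝ _ hCh.eigenvectorUnitary
  have hJ := hJ₀.map φ
  refine ⟨φ J₀, ?_, hJ.mul_self, ?_⟩
  · simpa only [star_eq_conjTranspose, conjTranspose_eq_transpose_of_trivial]
      using hJ.star_mul_self
  · rw [hCh.spectral_theorem, RCLike.ofReal_real_eq_id, Function.id_comp, ← he]
    exact (hJ₀D.map φ).eq

/-- If the characteristic polynomial of a real symmetric `2p × 2p`
matrix `C` is of the form `∏ (X - νᵢ)²` for some decreasing reals `ν₁ ≥ ⋯ ≥ ν_p`
(i.e. its ordered spectrum is the doubled list `(ν₁, ν₁, …, ν_p, ν_p)`), then `C`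
commutes with some hermitian structure `J` on `ℝ^{2p}`
(a real matrix with `Jᵀ * J = 1` and `J * J = -1`). -/
theorem doubled_spectrum_implies_hermitian_commuting_structure
    (p : ℕ) (hp : 1 ≤ p)
    (C : Matrix (Fin (2 * p)) (Fin (2 * p)) ℝ) (hC : C.IsSymm)
    (ν : Fin p → ℝ) (hν : Antitone ν)
    (hspec : C.charpoly = ∏ i : Fin p, (Polynomial.X - Polynomial.C (ν i)) ^ 2) :
    ∃ J : Matrix (Fin (2 * p)) (Fin (2 * p)) ℝ,
      Jᵀ * J = 1 ∧ J * J = -1 ∧ J * C = C * J :=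
  doubled_spectrum_implies_hermitian_commuting_structure_general p C hC ν hspec
end

section
/- Let p ≥ 1, 1 ≤ r < p, and let (I, J, K) be a triple of r-element subsets of {1, 2, …, p} belonging to U^p_r, i.e. satisfying ∑_{i∈I} i + ∑_{j∈J} j = ∑_{k∈K} k + r(r+1)/2. Define I₂ = J₂ = {2i − 1 : i ∈ I} ∪ {2j : j ∈ J} and K₂ = {2k − 1 : k ∈ K} ∪ {2k : k ∈ K}. Then I₂, J₂ and K₂ are 2r-element subsets of {1, 2, …, 2p} and the triple (I₂, J₂, K₂) belongs to U^{2p}_{2r}, i.e. ∑_{i∈I₂} i + ∑_{j∈J₂} j = ∑_{k∈K₂} k + 2r(2r+1)/2. -/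
lemma odd_inj : Function.Injective (fun i : ℕ => 2 * i - 1) := by
  intro a b h; simp only at h; omega

lemma even_inj : Function.Injective (fun i : ℕ => 2 * i) := by
  intro a b h; simp only at h; omega

lemma disj_oe (A B : Finset ℕ) (hA : A ⊆ Finset.Icc 1 (p:ℕ)) :
    Disjoint (A.image (fun i => 2 * i - 1)) (B.image (fun j => 2 * j)) := by
  rw [Finset.disjoint_left]
  rintro x hx hy
  simp only [Finset.mem_image] at hx hy
  obtain ⟨a, ha, rfl⟩ := hx
  obtain ⟨b, hb, hbe⟩ := hy
  have := hA ha
  simp only [Finset.mem_Icc] at this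
  omega

lemma sub_Icc (A : Finset ℕ) (p : ℕ) (hA : A ⊆ Finset.Icc 1 p) :
    (A.image (fun i => 2 * i - 1) ∪ A.image (fun j => 2 * j)) ⊆ Finset.Icc 1 (2 * p) := by
  intro x hx
  simp only [Finset.mem_union, Finset.mem_image] at hx
  simp only [Finset.mem_Icc]
  rcases hx with ⟨a, ha, rfl⟩ | ⟨a, ha, rfl⟩ <;>
    · have := hA ha; simp only [Finset.mem_Icc] at this; omega

lemma sum_odd (A : Finset ℕ) (p : ℕ) (hA : A ⊆ Finset.Icc 1 p) :
    ∑ x ∈ A.image (fun i => 2 * i - 1), x + A.card = 2 * ∑ i ∈ A, i := by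
  rw [Finset.sum_image (fun a _ b _ h => odd_inj h)]
  rw [Finset.card_eq_sum_ones A, ← Finset.sum_add_distrib, Finset.mul_sum]
  refine Finset.sum_congr rfl fun i hi => ?_
  have := hA hi; simp only [Finset.mem_Icc] at this; omega

lemma sum_even (A : Finset ℕ) :
    ∑ x ∈ A.image (fun i => 2 * i), x = 2 * ∑ i ∈ A, i := by
  rw [Finset.sum_image (fun a _ b _ h => even_inj h), Finset.mul_sum]

/-- Lemma 3 of the paper. If `(I, J, K) ∈ U^p_r`, i.e. `I`, `J`, `K`
are `r`-element subsets of `{1, …, p}` with `∑_{i∈I} i + ∑_{j∈J} j = ∑_{k∈K} k + r(r+1)/2`,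
then setting `I₂ = J₂ = {2i-1 : i ∈ I} ∪ {2j : j ∈ J}` and
`K₂ = {2k-1 : k ∈ K} ∪ {2k : k ∈ K}`, the sets `I₂` and `K₂` are `2r`-element subsets
of `{1, …, 2p}` and `(I₂, J₂, K₂) ∈ U^{2p}_{2r}`. -/
theorem doubled_triple_mem_U
    (p r : ℕ) (hp : 1 ≤ p) (hr : 1 ≤ r) (hrp : r < p)
    (I J K : Finset ℕ)
    (hI : I ⊆ Finset.Icc 1 p) (hJ : J ⊆ Finset.Icc 1 p) (hK : K ⊆ Finset.Icc 1 p)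
    (hIcard : I.card = r) (hJcard : J.card = r) (hKcard : K.card = r)
    (hsum : ∑ i ∈ I, i + ∑ j ∈ J, j = ∑ k ∈ K, k + r * (r + 1) / 2) :
    (I.image (fun i => 2 * i - 1) ∪ J.image (fun j => 2 * j)) ⊆ Finset.Icc 1 (2 * p) ∧
    (K.image (fun k => 2 * k - 1) ∪ K.image (fun k => 2 * k)) ⊆ Finset.Icc 1 (2 * p) ∧
    (I.image (fun i => 2 * i - 1) ∪ J.image (fun j => 2 * j)).card = 2 * r ∧
    (K.image (fun k => 2 * k - 1) ∪ K.image (fun k => 2 * k)).card = 2 * r ∧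
    ∑ i ∈ (I.image (fun i => 2 * i - 1) ∪ J.image (fun j => 2 * j)), i +
      ∑ j ∈ (I.image (fun i => 2 * i - 1) ∪ J.image (fun j => 2 * j)), j =
    ∑ k ∈ (K.image (fun k => 2 * k - 1) ∪ K.image (fun k => 2 * k)), k +
      (2 * r) * (2 * r + 1) / 2 := by
  have dIJ := disj_oe (p := p) I J hI
  have dKK := disj_oe (p := p) K K hK
  refine ⟨?_, sub_Icc K p hK, ?_, ?_, ?_⟩
  · intro x hx
    simp only [Finset.mem_union, Finset.mem_image] at hx
    simp only [Finset.mem_Icc]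
    rcases hx with ⟨a, ha, rfl⟩ | ⟨a, ha, rfl⟩
    · have := hI ha; simp only [Finset.mem_Icc] at this; omega
    · have := hJ ha; simp only [Finset.mem_Icc] at this; omega
  · rw [Finset.card_union_of_disjoint dIJ,
      Finset.card_image_of_injective _ odd_inj,
      Finset.card_image_of_injective _ even_inj, hIcard, hJcard]
    omega
  · rw [Finset.card_union_of_disjoint dKK,
      Finset.card_image_of_injective _ odd_inj,
      Finset.card_image_of_injective _ even_inj, hKcard]
    omega
  · rw [Finset.sum_union dIJ, Finset.sum_union dKK]
    have h1 := sum_odd I p hI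
    have h2 := sum_even J
    have h3 := sum_odd K p hK
    have h4 := sum_even K
    rw [h2, h4]
    have he : r * (r + 1) / 2 * 2 = r * (r + 1) :=
      Nat.div_mul_cancel (Nat.even_mul_succ_self r).two_dvd
    have hf : 2 * r * (2 * r + 1) / 2 = r * (2 * r + 1) := by
      rw [mul_assoc]; exact Nat.mul_div_cancel_left _ (by norm_num)
    have hg : r * (2 * r + 1) * 2 + 2 * r = r * (r + 1) * 4 := by ring
    omega
end
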